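/- Let H be a separable infinite-dimensional Hilbert space and A ∈ B(H,K) with nonclosed range. Then ι_i(A) = ι_f(A) = ℵ₀, i.e., dim ker(A) + IC(R(A)) = dim(K ⊖ closure R(A)) + IC(R(A)) = ℵ₀, where K is separable. -/

import Mathlib

/-- The Hilbert dimension of an inner product space: the supremum of cardinalities of
orthonormal subsets. -/
noncomputable def hdim (𝕜 E : Type*) [RCLike 𝕜] [NormedAddCommGroup E]
    [InnerProductSpace 𝕜 E] : Cardinal :=
  ⨆ s : {s : Set E // Orthonormal 𝕜 (fun x : s => (x : E))}, Cardinal.mk s.1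

/-- `IC(R(A))`: the index of incompleteness of the range of `A`. -/
noncomputable def rangeIC {H K : Type u} [NormedAddCommGroup H] [InnerProductSpace ℂ H]
    [CompleteSpace H] [NormedAddCommGroup K] [InnerProductSpace ℂ K] [CompleteSpace K]
    (A : H →L[ℂ] K) : Cardinal :=
  ⨅ V : {V : Submodule ℂ K // V ≤ LinearMap.range (A : H →ₗ[ℂ] K) ∧ IsComplete (V : Set K)},
    hdim ℂ ↥((V : Submodule ℂ K)ᗮ ⊓ (LinearMap.range (A : H →ₗ[ℂ] K)).topologicalClosure)

/-!
An admissible `V` is complete, so `R(A) = V ⊕ (R(A) ⊖ V)`. If `closure R(A) ⊖ V` were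
finite-dimensional, so would be `R(A) ⊖ V`, and `R(A)` would be closed as the sum of a closed and a
finite-dimensional subspace. Hence every `closure R(A) ⊖ V` is infinite-dimensional, and by
separability of `K` its Hilbert dimension is exactly `ℵ₀`; so `IC(R(A)) = ℵ₀`, which absorbs the
at most countable Hilbert dimensions of `ker A` and of `K ⊖ closure R(A)`.
-/

open TopologicalSpace Cardinal

section HilbertDimension

variable {𝕜 E : Type*} [RCLike 𝕜] [NormedAddCommGroup E] [InnerProductSpace 𝕜 E]

theorem Orthonormal.dist_eq_sqrt_two {ι : Type*} {v : ι → E} (hv : Orthonormal 𝕜 v) {i j : ι}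
    (hij : i ≠ j) : dist (v i) (v j) = √2 := by
  rw [dist_eq_norm, ← Real.sqrt_sq (norm_nonneg _), @norm_sub_sq 𝕜, hv.1 i, hv.1 j, hv.2 hij]
  norm_num

theorem Orthonormal.countable [SeparableSpace E] {ι : Type*} {v : ι → E}
    (hv : Orthonormal 𝕜 v) : Countable ι := by
  refine Pairwise.countable_of_isOpen_disjoint (s := fun i => Metric.ball (v i) 2⁻¹)
    (fun i j hij => Metric.ball_disjoint_ball ?_) (fun _ => Metric.isOpen_ball)
    (fun _ => Metric.nonempty_ball.2 (by norm_num))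
  rw [hv.dist_eq_sqrt_two hij, Real.le_sqrt (by norm_num) (by norm_num)]
  norm_num

theorem exists_orthonormal_nat_of_not_finiteDimensional (h : ¬ FiniteDimensional 𝕜 E) :
    ∃ v : ℕ → E, Orthonormal 𝕜 v := by
  let b := Module.Basis.ofVectorSpace 𝕜 E
  have : Infinite (Module.Basis.ofVectorSpaceIndex 𝕜 E) :=
    not_finite_iff_infinite.1 fun _ => h (Module.Finite.of_basis b)
  let e := Infinite.natEmbedding (Module.Basis.ofVectorSpaceIndex 𝕜 E)
  exact ⟨_, InnerProductSpace.gramSchmidtNormed_orthonormal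
    (b.linearIndependent.comp e e.injective)⟩

theorem hdim_le_aleph0 [SeparableSpace E] : hdim 𝕜 E ≤ ℵ₀ :=
  ciSup_le' fun s => mk_le_aleph0_iff.2 s.2.countable

theorem aleph0_le_hdim (h : ¬ FiniteDimensional 𝕜 E) : ℵ₀ ≤ hdim 𝕜 E := by
  obtain ⟨v, hv⟩ := exists_orthonormal_nat_of_not_finiteDimensional h
  calc ℵ₀ = #(Set.range v) := by
        simpa using (mk_range_eq_of_injective hv.linearIndependent.injective).symm
    _ ≤ hdim 𝕜 E := le_ciSup bddAbove_of_small
        (⟨Set.range v, hv.toSubtypeRange⟩ : {s : Set E // Orthonormal 𝕜 (fun x : s => (x : E))})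

theorem hdim_eq_aleph0 [SeparableSpace E] (h : ¬ FiniteDimensional 𝕜 E) : hdim 𝕜 E = ℵ₀ :=
  le_antisymm hdim_le_aleph0 (aleph0_le_hdim h)

end HilbertDimension

section Incompleteness

variable {𝕜 E : Type*} [RCLike 𝕜] [NormedAddCommGroup E] [InnerProductSpace 𝕜 E]

theorem Submodule.isClosed_of_le_of_finiteDimensional_orthogonal_inf {V R : Submodule 𝕜 E}
    (hV : IsComplete (V : Set E)) (hVR : V ≤ R) [FiniteDimensional 𝕜 ↥(Vᗮ ⊓ R)] :
    IsClosed (R : Set E) := by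
  have : CompleteSpace V := hV.completeSpace_coe
  rw [← Submodule.sup_orthogonal_inf_of_hasOrthogonalProjection hVR]
  exact Submodule.isClosed_sup_finiteDimensional _ _ hV.isClosed

theorem Submodule.not_finiteDimensional_orthogonal_inf_topologicalClosure {V R : Submodule 𝕜 E}
    (hV : IsComplete (V : Set E)) (hVR : V ≤ R) (hR : ¬ IsClosed (R : Set E)) :
    ¬ FiniteDimensional 𝕜 ↥(Vᗮ ⊓ R.topologicalClosure) := by
  intro hfin
  have : FiniteDimensional 𝕜 ↥(Vᗮ ⊓ R) :=
    Submodule.finiteDimensional_of_le (inf_le_inf_left _ R.le_topologicalClosure)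
  exact hR (Submodule.isClosed_of_le_of_finiteDimensional_orthogonal_inf hV hVR)

theorem rangeIC_eq_aleph0 {H K : Type u} [NormedAddCommGroup H] [InnerProductSpace ℂ H]
    [CompleteSpace H] [NormedAddCommGroup K] [InnerProductSpace ℂ K] [CompleteSpace K]
    [SeparableSpace K] (A : H →L[ℂ] K)
    (hrange : ¬ IsClosed (LinearMap.range (A : H →ₗ[ℂ] K) : Set K)) :
    rangeIC A = ℵ₀ := by
  have : Nonempty {V : Submodule ℂ K //
      V ≤ LinearMap.range (A : H →ₗ[ℂ] K) ∧ IsComplete (V : Set K)} :=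
    ⟨⟨⊥, bot_le, by simpa using isClosed_singleton.isComplete⟩⟩
  rw [rangeIC, iInf_congr fun V => hdim_eq_aleph0
    (Submodule.not_finiteDimensional_orthogonal_inf_topologicalClosure V.2.2 V.2.1 hrange)]
  exact ciInf_const

end Incompleteness

theorem iota_eq_aleph0_of_separable_nonclosed_range
    {H K : Type u} [NormedAddCommGroup H] [InnerProductSpace ℂ H] [CompleteSpace H]
    [NormedAddCommGroup K] [InnerProductSpace ℂ K] [CompleteSpace K]
    [TopologicalSpace.SeparableSpace H] [TopologicalSpace.SeparableSpace K]
    (A : H →L[ℂ] K) (hrange : ¬ IsClosed (LinearMap.range (A : H →ₗ[ℂ] K) : Set K)) :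
    hdim ℂ ↥(LinearMap.ker (A : H →ₗ[ℂ] K)) + rangeIC A = Cardinal.aleph0 ∧
    hdim ℂ ↥((LinearMap.range (A : H →ₗ[ℂ] K)).topologicalClosure)ᗮ + rangeIC A = Cardinal.aleph0 := by
  rw [rangeIC_eq_aleph0 A hrange]
  exact ⟨add_eq_right le_rfl hdim_le_aleph0, add_eq_right le_rfl hdim_le_aleph0⟩
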